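/- Let u_{ij} be the matrix entries of the 2-adic U operator in the basis of powers of f₂, and let F ∈ ℚ⟦x, y⟧ be the formal power series in two variables whose coefficient of x^i y^j is u_{ij} for i, j ≥ 1 and 0 otherwise. Let I₂(x,y) = 1 − 48xy − 4096x²y − xy². Then 2 · F · I₂(x,y) = 48xy + 4096x²y + 2xy²; equivalently, F · I₂ = −(y/2)·∂I₂/∂y, so that F is the Taylor expansion of the rational function −(y/2)·∂/∂y (log I₂(x,y)). (Thus U is an operator of rational generation in Smithline's sense.) -/

import Mathlib

/-- `σ_k(n) = Σ_{d ∣ n} d^k` as a rational number. -/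
noncomputable def sigmaQ (k n : ℕ) : ℚ := ∑ d ∈ n.divisors, (d : ℚ) ^ k

/-- The q-expansion of the level 1 Eisenstein series `E₄ = 1 + 240 Σ σ₃(n) qⁿ`. -/
noncomputable def E4 : PowerSeries ℚ :=
  PowerSeries.mk fun n => if n = 0 then 1 else 240 * sigmaQ 3 n

/-- The q-expansion of the level 1 Eisenstein series `E₆ = 1 − 504 Σ σ₅(n) qⁿ`. -/
noncomputable def E6 : PowerSeries ℚ :=
  PowerSeries.mk fun n => if n = 0 then 1 else -504 * sigmaQ 5 n

/-- The q-expansion of the discriminant cusp form `Δ = (E₄³ − E₆²)/1728`. -/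
noncomputable def Delta : PowerSeries ℚ :=
  PowerSeries.C (1 / 1728) * (E4 ^ 3 - E6 ^ 2)

/-- The operator `V_p` on q-expansions: substitution of `q^p` for `q`. -/
noncomputable def Vop (p : ℕ) (f : PowerSeries ℚ) : PowerSeries ℚ :=
  PowerSeries.mk fun n => if p ∣ n then PowerSeries.coeff (n / p) f else 0

/-- The operator `U_p` on q-expansions: `coeff_n (U_p h) = coeff_{p·n} h`. -/
noncomputable def Uop (p : ℕ) (f : PowerSeries ℚ) : PowerSeries ℚ :=
  PowerSeries.mk fun n => PowerSeries.coeff (p * n) f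



open PowerSeries


lemma cmul (a b : PowerSeries ℚ) (n : ℕ) : PowerSeries.coeff n (a*b)
    = ∑ k ∈ Finset.range (n+1), coeff k a * coeff (n-k) b := by
  rw [PowerSeries.coeff_mul, Finset.Nat.sum_antidiagonal_eq_sum_range_succ_mk]

lemma cE4_0 : coeff 0 E4 = 1 := by rw [E4, coeff_mk]; norm_num

lemma cE4_1 : coeff 1 E4 = 240 := by
  rw [E4, coeff_mk]; norm_num [sigmaQ, show Nat.divisors 1 = {1} from by decide]

lemma cE4_2 : coeff 2 E4 = 2160 := by
  rw [E4, coeff_mk]; norm_num [sigmaQ, show Nat.divisors 2 = {1,2} from by decide]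

lemma cE4_3 : coeff 3 E4 = 6720 := by
  rw [E4, coeff_mk]; norm_num [sigmaQ, show Nat.divisors 3 = {1,3} from by decide]

lemma cE4_4 : coeff 4 E4 = 17520 := by
  rw [E4, coeff_mk]; norm_num [sigmaQ, show Nat.divisors 4 = {1,2,4} from by decide]

lemma cE4_5 : coeff 5 E4 = 30240 := by
  rw [E4, coeff_mk]; norm_num [sigmaQ, show Nat.divisors 5 = {1,5} from by decide]

lemma cE4_6 : coeff 6 E4 = 60480 := by
  rw [E4, coeff_mk]; norm_num [sigmaQ, show Nat.divisors 6 = {1,2,3,6} from by decide]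

lemma cE4_7 : coeff 7 E4 = 82560 := by
  rw [E4, coeff_mk]; norm_num [sigmaQ, show Nat.divisors 7 = {1,7} from by decide]

lemma cE4_8 : coeff 8 E4 = 140400 := by
  rw [E4, coeff_mk]; norm_num [sigmaQ, show Nat.divisors 8 = {1,2,4,8} from by decide]

lemma cE6_0 : coeff 0 E6 = 1 := by rw [E6, coeff_mk]; norm_num

lemma cE6_1 : coeff 1 E6 = -504 := by
  rw [E6, coeff_mk]; norm_num [sigmaQ, show Nat.divisors 1 = {1} from by decide]

lemma cE6_2 : coeff 2 E6 = -16632 := by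
  rw [E6, coeff_mk]; norm_num [sigmaQ, show Nat.divisors 2 = {1,2} from by decide]

lemma cE6_3 : coeff 3 E6 = -122976 := by
  rw [E6, coeff_mk]; norm_num [sigmaQ, show Nat.divisors 3 = {1,3} from by decide]

lemma cE6_4 : coeff 4 E6 = -532728 := by
  rw [E6, coeff_mk]; norm_num [sigmaQ, show Nat.divisors 4 = {1,2,4} from by decide]

lemma cE6_5 : coeff 5 E6 = -1575504 := by
  rw [E6, coeff_mk]; norm_num [sigmaQ, show Nat.divisors 5 = {1,5} from by decide]

lemma cE6_6 : coeff 6 E6 = -4058208 := by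
  rw [E6, coeff_mk]; norm_num [sigmaQ, show Nat.divisors 6 = {1,2,3,6} from by decide]

lemma cE6_7 : coeff 7 E6 = -8471232 := by
  rw [E6, coeff_mk]; norm_num [sigmaQ, show Nat.divisors 7 = {1,7} from by decide]

lemma cE6_8 : coeff 8 E6 = -17047800 := by
  rw [E6, coeff_mk]; norm_num [sigmaQ, show Nat.divisors 8 = {1,2,4,8} from by decide]

lemma cE42_0 : coeff 0 (E4 * E4) = 1 := by
  rw [cmul]; norm_num [Finset.sum_range_succ, cE4_0]

lemma cE42_1 : coeff 1 (E4 * E4) = 480 := by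
  rw [cmul]; norm_num [Finset.sum_range_succ, cE4_0, cE4_1]

lemma cE42_2 : coeff 2 (E4 * E4) = 61920 := by
  rw [cmul]; norm_num [Finset.sum_range_succ, cE4_0, cE4_1, cE4_2]

lemma cE42_3 : coeff 3 (E4 * E4) = 1050240 := by
  rw [cmul]; norm_num [Finset.sum_range_succ, cE4_0, cE4_1, cE4_2, cE4_3]

lemma cE42_4 : coeff 4 (E4 * E4) = 7926240 := by
  rw [cmul]; norm_num [Finset.sum_range_succ, cE4_0, cE4_1, cE4_2, cE4_3, cE4_4]

lemma cE42_5 : coeff 5 (E4 * E4) = 37500480 := by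
  rw [cmul]; norm_num [Finset.sum_range_succ, cE4_0, cE4_1, cE4_2, cE4_3, cE4_4, cE4_5]

lemma cE42_6 : coeff 6 (E4 * E4) = 135480960 := by
  rw [cmul]; norm_num [Finset.sum_range_succ, cE4_0, cE4_1, cE4_2, cE4_3, cE4_4, cE4_5, cE4_6]

lemma cE42_7 : coeff 7 (E4 * E4) = 395301120 := by
  rw [cmul]; norm_num [Finset.sum_range_succ, cE4_0, cE4_1, cE4_2, cE4_3, cE4_4, cE4_5, cE4_6, cE4_7]

lemma cE42_8 : coeff 8 (E4 * E4) = 1014559200 := by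
  rw [cmul]; norm_num [Finset.sum_range_succ, cE4_0, cE4_1, cE4_2, cE4_3, cE4_4, cE4_5, cE4_6, cE4_7, cE4_8]

lemma cE43_0 : coeff 0 ((E4 * E4) * E4) = 1 := by
  rw [cmul]; norm_num [Finset.sum_range_succ, cE42_0, cE4_0]

lemma cE43_1 : coeff 1 ((E4 * E4) * E4) = 720 := by
  rw [cmul]; norm_num [Finset.sum_range_succ, cE42_0, cE42_1, cE4_0, cE4_1]

lemma cE43_2 : coeff 2 ((E4 * E4) * E4) = 179280 := by
  rw [cmul]; norm_num [Finset.sum_range_succ, cE42_0, cE42_1, cE42_2, cE4_0, cE4_1, cE4_2]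

lemma cE43_3 : coeff 3 ((E4 * E4) * E4) = 16954560 := by
  rw [cmul]; norm_num [Finset.sum_range_succ, cE42_0, cE42_1, cE42_2, cE42_3, cE4_0, cE4_1, cE4_2, cE4_3]

lemma cE43_4 : coeff 4 ((E4 * E4) * E4) = 396974160 := by
  rw [cmul]; norm_num [Finset.sum_range_succ, cE42_0, cE42_1, cE42_2, cE42_3, cE42_4, cE4_0, cE4_1, cE4_2, cE4_3, cE4_4]

lemma cE43_5 : coeff 5 ((E4 * E4) * E4) = 4632858720 := by
  rw [cmul]; norm_num [Finset.sum_range_succ, cE42_0, cE42_1, cE42_2, cE42_3, cE42_4, cE42_5, cE4_0, cE4_1, cE4_2, cE4_3, cE4_4, cE4_5]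

lemma cE43_6 : coeff 6 ((E4 * E4) * E4) = 34413301440 := by
  rw [cmul]; norm_num [Finset.sum_range_succ, cE42_0, cE42_1, cE42_2, cE42_3, cE42_4, cE42_5, cE42_6, cE4_0, cE4_1, cE4_2, cE4_3, cE4_4, cE4_5, cE4_6]

lemma cE43_7 : coeff 7 ((E4 * E4) * E4) = 187477879680 := by
  rw [cmul]; norm_num [Finset.sum_range_succ, cE42_0, cE42_1, cE42_2, cE42_3, cE42_4, cE42_5, cE42_6, cE42_7, cE4_0, cE4_1, cE4_2, cE4_3, cE4_4, cE4_5, cE4_6, cE4_7]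

lemma cE43_8 : coeff 8 ((E4 * E4) * E4) = 814940600400 := by
  rw [cmul]; norm_num [Finset.sum_range_succ, cE42_0, cE42_1, cE42_2, cE42_3, cE42_4, cE42_5, cE42_6, cE42_7, cE42_8, cE4_0, cE4_1, cE4_2, cE4_3, cE4_4, cE4_5, cE4_6, cE4_7, cE4_8]

lemma cE62_0 : coeff 0 (E6 * E6) = 1 := by
  rw [cmul]; norm_num [Finset.sum_range_succ, cE6_0]

lemma cE62_1 : coeff 1 (E6 * E6) = -1008 := by
  rw [cmul]; norm_num [Finset.sum_range_succ, cE6_0, cE6_1]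

lemma cE62_2 : coeff 2 (E6 * E6) = 220752 := by
  rw [cmul]; norm_num [Finset.sum_range_succ, cE6_0, cE6_1, cE6_2]

lemma cE62_3 : coeff 3 (E6 * E6) = 16519104 := by
  rw [cmul]; norm_num [Finset.sum_range_succ, cE6_0, cE6_1, cE6_2, cE6_3]

lemma cE62_4 : coeff 4 (E6 * E6) = 399517776 := by
  rw [cmul]; norm_num [Finset.sum_range_succ, cE6_0, cE6_1, cE6_2, cE6_3, cE6_4]

lemma cE62_5 : coeff 5 (E6 * E6) = 4624512480 := by
  rw [cmul]; norm_num [Finset.sum_range_succ, cE6_0, cE6_1, cE6_2, cE6_3, cE6_4, cE6_5]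

lemma cE62_6 : coeff 6 (E6 * E6) = 34423752384 := by
  rw [cmul]; norm_num [Finset.sum_range_succ, cE6_0, cE6_1, cE6_2, cE6_3, cE6_4, cE6_5, cE6_6]

lemma cE62_7 : coeff 7 (E6 * E6) = 187506813312 := by
  rw [cmul]; norm_num [Finset.sum_range_succ, cE6_0, cE6_1, cE6_2, cE6_3, cE6_4, cE6_5, cE6_6, cE6_7]

lemma cE62_8 : coeff 8 (E6 * E6) = 814794618960 := by
  rw [cmul]; norm_num [Finset.sum_range_succ, cE6_0, cE6_1, cE6_2, cE6_3, cE6_4, cE6_5, cE6_6, cE6_7, cE6_8]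

lemma cD_0 : coeff 0 Delta = 0 := by
  rw [Delta, PowerSeries.coeff_C_mul, show E4^3 = E4*E4*E4 from by ring, show E6^2 = E6*E6 from by ring, map_sub, cE43_0, cE62_0]; norm_num

lemma cD_1 : coeff 1 Delta = 1 := by
  rw [Delta, PowerSeries.coeff_C_mul, show E4^3 = E4*E4*E4 from by ring, show E6^2 = E6*E6 from by ring, map_sub, cE43_1, cE62_1]; norm_num

lemma cD_2 : coeff 2 Delta = -24 := by
  rw [Delta, PowerSeries.coeff_C_mul, show E4^3 = E4*E4*E4 from by ring, show E6^2 = E6*E6 from by ring, map_sub, cE43_2, cE62_2]; norm_num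

lemma cD_3 : coeff 3 Delta = 252 := by
  rw [Delta, PowerSeries.coeff_C_mul, show E4^3 = E4*E4*E4 from by ring, show E6^2 = E6*E6 from by ring, map_sub, cE43_3, cE62_3]; norm_num

lemma cD_4 : coeff 4 Delta = -1472 := by
  rw [Delta, PowerSeries.coeff_C_mul, show E4^3 = E4*E4*E4 from by ring, show E6^2 = E6*E6 from by ring, map_sub, cE43_4, cE62_4]; norm_num

lemma cD_5 : coeff 5 Delta = 4830 := by
  rw [Delta, PowerSeries.coeff_C_mul, show E4^3 = E4*E4*E4 from by ring, show E6^2 = E6*E6 from by ring, map_sub, cE43_5, cE62_5]; norm_num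

lemma cD_6 : coeff 6 Delta = -6048 := by
  rw [Delta, PowerSeries.coeff_C_mul, show E4^3 = E4*E4*E4 from by ring, show E6^2 = E6*E6 from by ring, map_sub, cE43_6, cE62_6]; norm_num

lemma cD_7 : coeff 7 Delta = -16744 := by
  rw [Delta, PowerSeries.coeff_C_mul, show E4^3 = E4*E4*E4 from by ring, show E6^2 = E6*E6 from by ring, map_sub, cE43_7, cE62_7]; norm_num

lemma cD_8 : coeff 8 Delta = 84480 := by
  rw [Delta, PowerSeries.coeff_C_mul, show E4^3 = E4*E4*E4 from by ring, show E6^2 = E6*E6 from by ring, map_sub, cE43_8, cE62_8]; norm_num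


lemma coeff_Vop2 (a : PowerSeries ℚ) (n : ℕ) :
    coeff n (Vop 2 a) = if 2 ∣ n then coeff (n/2) a else 0 := by
  rw [Vop, coeff_mk]

lemma coeff_Vop2_even (a : PowerSeries ℚ) (m : ℕ) :
    coeff (2*m) (Vop 2 a) = coeff m a := by
  rw [coeff_Vop2, if_pos ⟨m, rfl⟩, Nat.mul_div_cancel_left m (by norm_num)]

lemma coeff_Uop2 (a : PowerSeries ℚ) (n : ℕ) :
    coeff n (Uop 2 a) = coeff (2*n) a := by
  rw [Uop, coeff_mk]

lemma Vop2_mul (a b : PowerSeries ℚ) : Vop 2 (a * b) = Vop 2 a * Vop 2 b := by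
  ext n
  rw [coeff_Vop2]
  by_cases h2 : 2 ∣ n
  · obtain ⟨m, rfl⟩ := h2
    rw [if_pos ⟨m, rfl⟩, Nat.mul_div_cancel_left m (by norm_num),
      PowerSeries.coeff_mul, PowerSeries.coeff_mul]
    have hinj : Function.Injective (fun p : ℕ × ℕ => (2*p.1, 2*p.2)) := by
      intro p q h
      simp only [Prod.mk.injEq] at h
      exact Prod.ext (by omega) (by omega)
    calc ∑ p ∈ Finset.HasAntidiagonal.antidiagonal m, coeff p.1 a * coeff p.2 b
        = ∑ p ∈ Finset.HasAntidiagonal.antidiagonal m,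
            coeff (2*p.1) (Vop 2 a) * coeff (2*p.2) (Vop 2 b) := by
          refine Finset.sum_congr rfl fun p _ => ?_
          rw [coeff_Vop2_even, coeff_Vop2_even]
      _ = ∑ p ∈ (Finset.HasAntidiagonal.antidiagonal m).map ⟨fun p : ℕ × ℕ => (2*p.1, 2*p.2), hinj⟩,
            coeff p.1 (Vop 2 a) * coeff p.2 (Vop 2 b) := by
          rw [Finset.sum_map]
          exact Finset.sum_congr rfl fun p _ => rfl
      _ = ∑ p ∈ Finset.HasAntidiagonal.antidiagonal (2*m),
            coeff p.1 (Vop 2 a) * coeff p.2 (Vop 2 b) := by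
          refine Finset.sum_subset ?_ ?_
          · intro p hp
            simp only [Finset.mem_map, Finset.HasAntidiagonal.mem_antidiagonal, Function.Embedding.coeFn_mk] at hp ⊢
            obtain ⟨q, hq, rfl⟩ := hp
            omega
          · intro x hx hnx
            simp only [Finset.mem_map, Finset.HasAntidiagonal.mem_antidiagonal, Function.Embedding.coeFn_mk] at hx hnx
            by_cases hd : 2 ∣ x.1
            · exfalso
              exact hnx ⟨(x.1/2, x.2/2), by omega, Prod.ext (by omega) (by omega)⟩
            · rw [coeff_Vop2, if_neg hd, zero_mul]
  · rw [if_neg h2, PowerSeries.coeff_mul]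
    symm
    refine Finset.sum_eq_zero fun p hp => ?_
    simp only [Finset.HasAntidiagonal.mem_antidiagonal] at hp
    by_cases hd : 2 ∣ p.1
    · rw [coeff_Vop2 b, if_neg (by omega), mul_zero]
    · rw [coeff_Vop2 a, if_neg hd, zero_mul]

lemma Vop2_one : Vop 2 (1 : PowerSeries ℚ) = 1 := by
  ext n
  rw [coeff_Vop2]
  rcases n with _ | n
  · simp
  · rw [show (coeff (n+1)) (1 : PowerSeries ℚ) = 0 from by simp]
    split_ifs with h
    · rw [PowerSeries.coeff_one, if_neg (by omega)]
    · rfl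

lemma Vop2_add (a b : PowerSeries ℚ) : Vop 2 (a + b) = Vop 2 a + Vop 2 b := by
  ext n
  rw [map_add, coeff_Vop2, coeff_Vop2, coeff_Vop2, map_add]
  split_ifs <;> simp

/-- `Vop 2` as a ring homomorphism. -/
noncomputable def V2h : PowerSeries ℚ →+* PowerSeries ℚ where
  toFun := Vop 2
  map_one' := Vop2_one
  map_mul' := Vop2_mul
  map_zero' := by ext n; rw [coeff_Vop2]; simp
  map_add' := Vop2_add

lemma V2h_apply (a : PowerSeries ℚ) : V2h a = Vop 2 a := rfl

lemma Vop2_pow (a : PowerSeries ℚ) (k : ℕ) : Vop 2 (a ^ k) = (Vop 2 a) ^ k := by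
  rw [← V2h_apply, ← V2h_apply, map_pow]

lemma Vop2_C (c : ℚ) : Vop 2 (PowerSeries.C c) = PowerSeries.C c := by
  ext n
  rw [coeff_Vop2]
  rcases n with _ | n
  · simp
  · rw [show (coeff (n+1)) (PowerSeries.C c) = 0 from by simp]
    split_ifs with h
    · rw [PowerSeries.coeff_C, if_neg (by omega)]
    · rfl

/-- Key relation: `h(q) + h(-q) = 2 · V₂(U₂ h)`. -/
lemma UV_key (h : PowerSeries ℚ) :
    h + rescale (-1) h = (2 : PowerSeries ℚ) * Vop 2 (Uop 2 h) := by
  have h2 : (2 : PowerSeries ℚ) = PowerSeries.C 2 := (map_ofNat PowerSeries.C 2).symm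
  ext n
  rw [map_add, coeff_rescale, h2, PowerSeries.coeff_C_mul, coeff_Vop2]
  rcases Nat.even_or_odd n with ⟨m, rfl⟩ | hodd
  · rw [if_pos ⟨m, by omega⟩, coeff_Uop2, show (m+m)/2 = m from by omega,
      show 2*m = m+m from by omega]
    have : (-1 : ℚ) ^ (m + m) = 1 := Even.neg_one_pow ⟨m, rfl⟩
    rw [this]; ring
  · have hodd' := hodd
    obtain ⟨m, rfl⟩ := hodd'
    rw [if_neg (by omega), Odd.neg_one_pow hodd]; ring


lemma fpow_triangular (f : PowerSeries ℚ) (h0 : coeff 0 f = 0) (h1 : coeff 1 f = 1) :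
    ∀ i : ℕ, (∀ k, k < i → coeff k (f ^ i) = 0) ∧ coeff i (f ^ i) = 1 := by
  intro i
  induction i with
  | zero => exact ⟨fun k hk => absurd hk (Nat.not_lt_zero k), by simp⟩
  | succ i ih =>
    obtain ⟨ihz, ihd⟩ := ih
    constructor
    · intro k hk
      rw [pow_succ, cmul]
      refine Finset.sum_eq_zero fun j hj => ?_
      simp only [Finset.mem_range] at hj
      rcases lt_trichotomy j i with hji | rfl | hji
      · rw [ihz j hji, zero_mul]
      · rw [show k - j = 0 from by omega, h0, mul_zero]
      · exfalso; omega
    · rw [pow_succ, cmul]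
      rw [Finset.sum_eq_single i]
      · rw [ihd, show i+1-i = 1 from by omega, h1, one_mul]
      · intro j hj hne
        simp only [Finset.mem_range] at hj
        rcases lt_or_gt_of_ne hne with hji | hji
        · rw [ihz j hji, zero_mul]
        · rw [show i+1-j = 0 from by omega, h0, mul_zero]
      · intro hni; exact absurd (Finset.mem_range.mpr (by omega)) hni

lemma sum_s_eq_zero (f : PowerSeries ℚ) (h0 : coeff 0 f = 0) (h1 : coeff 1 f = 1)
    (c : ℕ → ℚ) (hc0 : c 0 = 0) (N : ℕ)
    (h : ∑ i ∈ Finset.range N, PowerSeries.C (c i) * (Vop 2 f) ^ i = 0) :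
    ∀ i, i < N → c i = 0 := by
  intro i
  induction i using Nat.strong_induction_on with
  | _ k IH =>
  intro hkN
  rcases Nat.eq_zero_or_pos k with rfl | hk
  · exact hc0
  have hco := congrArg (coeff (2*k)) h
  rw [map_sum, map_zero] at hco
  have hterm : ∀ j, coeff (2*k) ((Vop 2 f)^j) = coeff k (f^j) := fun j => by
    rw [← Vop2_pow, coeff_Vop2_even]
  rw [Finset.sum_eq_single k] at hco
  · rw [PowerSeries.coeff_C_mul, hterm, (fpow_triangular f h0 h1 k).2, mul_one] at hco
    exact hco
  · intro j hj hne
    rw [PowerSeries.coeff_C_mul, hterm]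
    rcases lt_or_gt_of_ne hne with hjk | hjk
    · rw [IH j hjk (by omega), zero_mul]
    · rw [(fpow_triangular f h0 h1 j).1 k hjk, mul_zero]
  · intro hk'; exact absurd (Finset.mem_range.mpr hkN) hk'

lemma shift1 (t : PowerSeries ℚ) (c : ℕ → ℚ) (N : ℕ) (hc0 : c 0 = 0) (hcN : c N = 0) :
    t * ∑ i ∈ Finset.range (N+1), PowerSeries.C (c i) * t ^ i
      = ∑ i ∈ Finset.range (N+1), PowerSeries.C (c (i-1)) * t ^ i := by
  have hR : ∑ i ∈ Finset.range (N+1), PowerSeries.C (c (i-1)) * t ^ i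
      = ∑ i ∈ Finset.range N, PowerSeries.C (c i) * t ^ (i+1) := by
    rw [Finset.sum_range_succ']
    simp only [Nat.add_sub_cancel, pow_zero, mul_one, Nat.zero_sub, hc0, map_zero, add_zero]
  rw [hR, Finset.mul_sum, Finset.sum_range_succ, hcN]
  simp only [map_zero, zero_mul, mul_zero, add_zero]
  exact Finset.sum_congr rfl fun i _ => by ring

lemma C_mul_sum (a : ℚ) (c : ℕ → ℚ) (t : PowerSeries ℚ) (N : ℕ) :
    PowerSeries.C a * ∑ i ∈ Finset.range N, PowerSeries.C (c i) * t ^ i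
      = ∑ i ∈ Finset.range N, PowerSeries.C (a * c i) * t ^ i := by
  rw [Finset.mul_sum]
  exact Finset.sum_congr rfl fun i _ => by rw [map_mul]; ring

lemma Icc_to_range (c : ℕ → ℚ) (t : PowerSeries ℚ) (M N : ℕ) (hMN : M < N)
    (hc0 : c 0 = 0) (htop : ∀ i, M < i → c i = 0) :
    ∑ i ∈ Finset.Icc 1 M, PowerSeries.C (c i) * t ^ i
      = ∑ i ∈ Finset.range N, PowerSeries.C (c i) * t ^ i := by
  refine Finset.sum_subset ?_ ?_
  · intro i hi; simp only [Finset.mem_Icc, Finset.mem_range] at *; omega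
  · intro i hi hni
    simp only [Finset.mem_Icc, Finset.mem_range] at hi hni
    have hz : c i = 0 := by
      rcases Nat.eq_zero_or_pos i with rfl | h
      · exact hc0
      · exact htop i (by omega)
    rw [hz, map_zero, zero_mul]


set_option maxHeartbeats 2000000 in
/-- **`U₂` is an operator of rational generation (Smithline).**
Let `u i j` be the matrix entries of `U₂` in the basis of powers of `f₂`, and let
`F ∈ ℚ⟦x,y⟧` be the two-variable power series with coefficient of `x^i y^j` equal to
`u i j` for `i, j ≥ 1` and `0` otherwise.  With `I₂(x,y) = 1 − 48xy − 4096x²y − xy²`, one has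
`2·F·I₂ = 48xy + 4096x²y + 2xy²`, i.e. `F·I₂ = −(y/2)·∂I₂/∂y`, so `F` is the Taylor
expansion of `−(y/2)·∂/∂y (log I₂(x,y))`. -/
theorem U2_rational_generation
    (f : PowerSeries ℚ)
    (hf1 : PowerSeries.coeff 1 f = 1)
    (hf : f * Delta = Vop 2 Delta)
    (u : ℕ → ℕ → ℚ)
    (hu_zero : ∀ i j : ℕ, i = 0 ∨ j = 0 ∨ 2 * j < i → u i j = 0)
    (hu : ∀ j : ℕ, 1 ≤ j →
      Uop 2 (f ^ j) = ∑ i ∈ Finset.Icc 1 (2 * j), PowerSeries.C (u i j) * f ^ i)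
    (F : MvPowerSeries (Fin 2) ℚ)
    (hF : ∀ e : Fin 2 →₀ ℕ,
      MvPowerSeries.coeff e F = if 1 ≤ e 0 ∧ 1 ≤ e 1 then u (e 0) (e 1) else 0)
    (X Y I₂ : MvPowerSeries (Fin 2) ℚ)
    (hX : X = MvPowerSeries.X 0) (hY : Y = MvPowerSeries.X 1)
    (hI : I₂ = 1 - 48 * X * Y - 4096 * X ^ 2 * Y - X * Y ^ 2) :
    2 * F * I₂ = 48 * X * Y + 4096 * X ^ 2 * Y + 2 * X * Y ^ 2 := by
  have cf_0c : PowerSeries.constantCoeff f = 0 := by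
    have h := congrArg (coeff 1) hf
    rw [cmul, coeff_Vop2] at h
    norm_num [Finset.sum_range_succ, cD_0, cD_1] at h
    linarith
  have cf_0 : coeff 0 f = 0 := by
    rw [PowerSeries.coeff_zero_eq_constantCoeff]; exact cf_0c
  have cf_1 : coeff 1 f = 1 := hf1
  have cf_2 : coeff 2 f = 24 := by
    have h := congrArg (coeff 3) hf
    rw [cmul, coeff_Vop2] at h
    norm_num [Finset.sum_range_succ, cD_0, cD_1, cD_2, cD_3, cf_0, cf_0c, cf_1] at h
    linarith
  have cf_3 : coeff 3 f = 300 := by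
    have h := congrArg (coeff 4) hf
    rw [cmul, coeff_Vop2] at h
    norm_num [Finset.sum_range_succ, cD_0, cD_1, cD_2, cD_3, cD_4, cf_0, cf_0c, cf_1, cf_2] at h
    linarith
  have cf_4 : coeff 4 f = 2624 := by
    have h := congrArg (coeff 5) hf
    rw [cmul, coeff_Vop2] at h
    norm_num [Finset.sum_range_succ, cD_0, cD_1, cD_2, cD_3, cD_4, cD_5, cf_0, cf_0c, cf_1, cf_2, cf_3] at h
    linarith
  have cf_5 : coeff 5 f = 18126 := by
    have h := congrArg (coeff 6) hf
    rw [cmul, coeff_Vop2] at h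
    norm_num [Finset.sum_range_succ, cD_0, cD_1, cD_2, cD_3, cD_4, cD_5, cD_6, cf_0, cf_0c, cf_1, cf_2, cf_3, cf_4] at h
    linarith
  have cf_6 : coeff 6 f = 105504 := by
    have h := congrArg (coeff 7) hf
    rw [cmul, coeff_Vop2] at h
    norm_num [Finset.sum_range_succ, cD_0, cD_1, cD_2, cD_3, cD_4, cD_5, cD_6, cD_7, cf_0, cf_0c, cf_1, cf_2, cf_3, cf_4, cf_5] at h
    linarith
  have cf_7 : coeff 7 f = 538296 := by
    have h := congrArg (coeff 8) hf
    rw [cmul, coeff_Vop2] at h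
    norm_num [Finset.sum_range_succ, cD_0, cD_1, cD_2, cD_3, cD_4, cD_5, cD_6, cD_7, cD_8, cf_0, cf_0c, cf_1, cf_2, cf_3, cf_4, cf_5, cf_6] at h
    linarith
  have cff_0 : coeff 0 (f*f) = 0 := by
    rw [cmul]; norm_num [Finset.sum_range_succ, cf_0, cf_0c]
  have cff_1 : coeff 1 (f*f) = 0 := by
    rw [cmul]; norm_num [Finset.sum_range_succ, cf_0, cf_0c, cf_1]
  have cff_2 : coeff 2 (f*f) = 1 := by
    rw [cmul]; norm_num [Finset.sum_range_succ, cf_0, cf_0c, cf_1, cf_2]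
  have cff_3 : coeff 3 (f*f) = 48 := by
    rw [cmul]; norm_num [Finset.sum_range_succ, cf_0, cf_0c, cf_1, cf_2, cf_3]
  have cff_4 : coeff 4 (f*f) = 1176 := by
    rw [cmul]; norm_num [Finset.sum_range_succ, cf_0, cf_0c, cf_1, cf_2, cf_3, cf_4]
  have cff_5 : coeff 5 (f*f) = 19648 := by
    rw [cmul]; norm_num [Finset.sum_range_succ, cf_0, cf_0c, cf_1, cf_2, cf_3, cf_4, cf_5]
  have cff_6 : coeff 6 (f*f) = 252204 := by
    rw [cmul]; norm_num [Finset.sum_range_succ, cf_0, cf_0c, cf_1, cf_2, cf_3, cf_4, cf_5, cf_6]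
  have cff_7 : coeff 7 (f*f) = 2655456 := by
    rw [cmul]; norm_num [Finset.sum_range_succ, cf_0, cf_0c, cf_1, cf_2, cf_3, cf_4, cf_5, cf_6, cf_7]
  have cff_8 : coeff 8 (f*f) = 23901760 := by
    rw [cmul]; norm_num [Finset.sum_range_succ, cf_0, cf_0c, cf_1, cf_2, cf_3, cf_4, cf_5, cf_6, cf_7]
  have cfff_0 : coeff 0 (f*f*f) = 0 := by
    rw [cmul]; norm_num [Finset.sum_range_succ, cf_0, cf_0c, cff_0]
  have cfff_1 : coeff 1 (f*f*f) = 0 := by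
    rw [cmul]; norm_num [Finset.sum_range_succ, cf_0, cf_0c, cf_1, cff_0, cff_1]
  have cfff_2 : coeff 2 (f*f*f) = 0 := by
    rw [cmul]; norm_num [Finset.sum_range_succ, cf_0, cf_0c, cf_1, cf_2, cff_0, cff_1, cff_2]
  have cfff_3 : coeff 3 (f*f*f) = 1 := by
    rw [cmul]; norm_num [Finset.sum_range_succ, cf_0, cf_0c, cf_1, cf_2, cf_3, cff_0, cff_1, cff_2, cff_3]
  have cfff_4 : coeff 4 (f*f*f) = 72 := by
    rw [cmul]; norm_num [Finset.sum_range_succ, cf_0, cf_0c, cf_1, cf_2, cf_3, cf_4, cff_0, cff_1, cff_2, cff_3, cff_4]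
  have cffff_0 : coeff 0 (f*f*f*f) = 0 := by
    rw [cmul]; norm_num [Finset.sum_range_succ, cf_0, cf_0c, cfff_0]
  have cffff_1 : coeff 1 (f*f*f*f) = 0 := by
    rw [cmul]; norm_num [Finset.sum_range_succ, cf_0, cf_0c, cf_1, cfff_0, cfff_1]
  have cffff_2 : coeff 2 (f*f*f*f) = 0 := by
    rw [cmul]; norm_num [Finset.sum_range_succ, cf_0, cf_0c, cf_1, cf_2, cfff_0, cfff_1, cfff_2]
  have cffff_3 : coeff 3 (f*f*f*f) = 0 := by
    rw [cmul]; norm_num [Finset.sum_range_succ, cf_0, cf_0c, cf_1, cf_2, cf_3, cfff_0, cfff_1, cfff_2, cfff_3]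
  have cffff_4 : coeff 4 (f*f*f*f) = 1 := by
    rw [cmul]; norm_num [Finset.sum_range_succ, cf_0, cf_0c, cf_1, cf_2, cf_3, cf_4, cfff_0, cfff_1, cfff_2, cfff_3, cfff_4]
  have hu1 := hu 1 le_rfl
  rw [show Finset.Icc 1 (2*1) = {1, 2} from by decide] at hu1
  rw [Finset.sum_insert (by decide), Finset.sum_singleton, pow_one,
    show f^2 = f*f from by ring] at hu1
  have e11 := congrArg (coeff 1) hu1
  have e12 := congrArg (coeff 2) hu1
  norm_num [coeff_Uop2, map_add, PowerSeries.coeff_C_mul, cf_1, cf_2, cf_4, cff_1, cff_2]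
    at e11 e12
  have u11 : u 1 1 = 24 := by linarith
  have u21 : u 2 1 = 2048 := by linarith
  have hu2 := hu 2 (by norm_num)
  rw [show Finset.Icc 1 (2*2) = {1, 2, 3, 4} from by decide] at hu2
  rw [Finset.sum_insert (by decide), Finset.sum_insert (by decide),
    Finset.sum_insert (by decide), Finset.sum_singleton, pow_one,
    show f^2 = f*f from by ring, show f^3 = f*f*f from by ring,
    show f^4 = f*f*f*f from by ring] at hu2
  have e21 := congrArg (coeff 1) hu2
  have e22 := congrArg (coeff 2) hu2
  have e23 := congrArg (coeff 3) hu2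
  have e24 := congrArg (coeff 4) hu2
  norm_num [coeff_Uop2, map_add, PowerSeries.coeff_C_mul, cf_1, cf_2, cf_3, cf_4,
    cff_1, cff_2, cff_3, cff_4, cff_6, cff_8, cfff_1, cfff_2, cfff_3, cfff_4,
    cffff_1, cffff_2, cffff_3, cffff_4] at e21 e22 e23 e24
  have u12 : u 1 2 = 1 := by linarith
  have u22 : u 2 2 = 1152 := by linarith
  have u32 : u 3 2 = 196608 := by linarith
  have u42 : u 4 2 = 8388608 := by linarith
  have hz : ∀ j, u 0 j = 0 := fun j => hu_zero 0 j (Or.inl rfl)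
  have hz' : ∀ i, u i 0 = 0 := fun i => hu_zero i 0 (Or.inr (Or.inl rfl))
  have hsum : ∀ j, 1 ≤ j → f^j + (rescale (-1) f)^j
      = 2 * ∑ i ∈ Finset.Icc 1 (2*j), PowerSeries.C (u i j) * (Vop 2 f) ^ i := by
    intro j hj
    have hk := UV_key (f ^ j)
    rw [hu j hj] at hk
    have hV : Vop 2 (∑ i ∈ Finset.Icc 1 (2*j), PowerSeries.C (u i j) * f ^ i)
        = ∑ i ∈ Finset.Icc 1 (2*j), PowerSeries.C (u i j) * (Vop 2 f) ^ i := by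
      rw [← V2h_apply, map_sum]
      refine Finset.sum_congr rfl fun i _ => ?_
      rw [map_mul, map_pow, V2h_apply, V2h_apply, Vop2_C]
    rw [hV, map_pow] at hk
    exact hk
  have two_ne : (2 : PowerSeries ℚ) ≠ 0 := by
    intro hc
    have h0 := congrArg (coeff 0) hc
    rw [show (2 : PowerSeries ℚ) = PowerSeries.C 2 from (map_ofNat _ _).symm] at h0
    simp at h0
  have h1n : f + rescale (-1) f = 48 * (Vop 2 f) + 4096 * (Vop 2 f)^2 := by
    have h := hsum 1 le_rfl
    rw [show Finset.Icc 1 (2*1) = {1, 2} from by decide, Finset.sum_insert (by decide),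
      Finset.sum_singleton, u11, u21] at h
    simp only [pow_one] at h
    rw [h, show PowerSeries.C (24:ℚ) = (24 : PowerSeries ℚ) from map_ofNat _ _,
      show PowerSeries.C (2048:ℚ) = (2048 : PowerSeries ℚ) from map_ofNat _ _]
    ring
  have h2n : f^2 + (rescale (-1) f)^2
      = 2*(Vop 2 f) + 2304*(Vop 2 f)^2 + 393216*(Vop 2 f)^3 + 16777216*(Vop 2 f)^4 := by
    have h := hsum 2 (by norm_num)
    rw [show Finset.Icc 1 (2*2) = {1, 2, 3, 4} from by decide, Finset.sum_insert (by decide),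
      Finset.sum_insert (by decide), Finset.sum_insert (by decide),
      Finset.sum_singleton, u12, u22, u32, u42] at h
    simp only [pow_one] at h
    rw [h, map_one,
      show PowerSeries.C (1152:ℚ) = (1152 : PowerSeries ℚ) from map_ofNat _ _,
      show PowerSeries.C (196608:ℚ) = (196608 : PowerSeries ℚ) from map_ofNat _ _,
      show PowerSeries.C (8388608:ℚ) = (8388608 : PowerSeries ℚ) from map_ofNat _ _]
    ring
  have hfg : f * rescale (-1) f = - (Vop 2 f) := by
    have key : (2 : PowerSeries ℚ) * (f * rescale (-1) f) = 2 * (- (Vop 2 f)) := by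
      linear_combination (f + rescale (-1) f + 48*(Vop 2 f) + 4096*(Vop 2 f)^2) * h1n - h2n
    exact mul_left_cancel₀ two_ne key
  have hrec : ∀ m i, u i (m+3)
      = 48 * u (i-1) (m+2) + 4096 * u (i-1-1) (m+2) + u (i-1) (m+1) := by
    intro m
    have hS3 := hsum (m+3) (by omega)
    have hS2 := hsum (m+2) (by omega)
    have hS1 := hsum (m+1) (by omega)
    rw [Icc_to_range (fun i => u i (m+3)) (Vop 2 f) (2*(m+3)) (2*m+6+1) (by omega) (hz _)
      (fun i hi => hu_zero i (m+3) (by omega))] at hS3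
    rw [Icc_to_range (fun i => u i (m+2)) (Vop 2 f) (2*(m+2)) (2*m+6+1) (by omega) (hz _)
      (fun i hi => hu_zero i (m+2) (by omega))] at hS2
    rw [Icc_to_range (fun i => u i (m+1)) (Vop 2 f) (2*(m+1)) (2*m+6+1) (by omega) (hz _)
      (fun i hi => hu_zero i (m+1) (by omega))] at hS1
    have hcomb : (2 : PowerSeries ℚ)
          * (∑ i ∈ Finset.range (2*m+6+1), PowerSeries.C (u i (m+3)) * (Vop 2 f) ^ i)
        = 2 * ((48*(Vop 2 f)+4096*(Vop 2 f)^2)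
              * (∑ i ∈ Finset.range (2*m+6+1), PowerSeries.C (u i (m+2)) * (Vop 2 f) ^ i)
            + (Vop 2 f)
              * (∑ i ∈ Finset.range (2*m+6+1), PowerSeries.C (u i (m+1)) * (Vop 2 f) ^ i)) := by
      linear_combination (-1 : PowerSeries ℚ) * hS3
        + (f^(m+2)+(rescale (-1) f)^(m+2)) * h1n
        - (f^(m+1)+(rescale (-1) f)^(m+1)) * hfg
        + (48*(Vop 2 f)+4096*(Vop 2 f)^2) * hS2 + (Vop 2 f) * hS1
    have hmain := mul_left_cancel₀ two_ne hcomb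
    have hsh2 := shift1 (Vop 2 f) (fun i => u i (m+2)) (2*m+6) (hz _)
      (hu_zero _ _ (by omega))
    have hsh2' := shift1 (Vop 2 f) (fun i => u (i-1) (m+2)) (2*m+6) (hz _)
      (hu_zero _ _ (by omega))
    have hsh1 := shift1 (Vop 2 f) (fun i => u i (m+1)) (2*m+6) (hz _)
      (hu_zero _ _ (by omega))
    have habs48 := C_mul_sum (48:ℚ) (fun i => u (i-1) (m+2)) (Vop 2 f) (2*m+6+1)
    have habs4096 := C_mul_sum (4096:ℚ) (fun i => u (i-1-1) (m+2)) (Vop 2 f) (2*m+6+1)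
    have hfinal : ∑ i ∈ Finset.range (2*m+6+1), PowerSeries.C (u i (m+3)) * (Vop 2 f) ^ i
        = ∑ i ∈ Finset.range (2*m+6+1), PowerSeries.C
            (48 * u (i-1) (m+2) + 4096 * u (i-1-1) (m+2) + u (i-1) (m+1)) * (Vop 2 f) ^ i := by
      rw [hmain,
        show (48*(Vop 2 f)+4096*(Vop 2 f)^2)
              * (∑ i ∈ Finset.range (2*m+6+1), PowerSeries.C (u i (m+2)) * (Vop 2 f) ^ i)
            + (Vop 2 f)
              * (∑ i ∈ Finset.range (2*m+6+1), PowerSeries.C (u i (m+1)) * (Vop 2 f) ^ i)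
          = 48*((Vop 2 f) * (∑ i ∈ Finset.range (2*m+6+1),
                PowerSeries.C (u i (m+2)) * (Vop 2 f) ^ i))
            + 4096*((Vop 2 f) * ((Vop 2 f) * (∑ i ∈ Finset.range (2*m+6+1),
                PowerSeries.C (u i (m+2)) * (Vop 2 f) ^ i)))
            + (Vop 2 f) * (∑ i ∈ Finset.range (2*m+6+1),
                PowerSeries.C (u i (m+1)) * (Vop 2 f) ^ i) from by ring,
        hsh2, hsh2', hsh1,
        show (48 : PowerSeries ℚ) = PowerSeries.C 48 from (map_ofNat _ _).symm,
        show (4096 : PowerSeries ℚ) = PowerSeries.C 4096 from (map_ofNat _ _).symm,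
        habs48, habs4096, ← Finset.sum_add_distrib, ← Finset.sum_add_distrib]
      refine Finset.sum_congr rfl fun i _ => ?_
      rw [map_add, map_add]; ring
    have hdiff : ∑ i ∈ Finset.range (2*m+6+1), PowerSeries.C
        (u i (m+3) - (48 * u (i-1) (m+2) + 4096 * u (i-1-1) (m+2) + u (i-1) (m+1)))
          * (Vop 2 f) ^ i = 0 := by
      have hsplit : ∀ i ∈ Finset.range (2*m+6+1), PowerSeries.C
          (u i (m+3) - (48 * u (i-1) (m+2) + 4096 * u (i-1-1) (m+2) + u (i-1) (m+1)))
            * (Vop 2 f) ^ i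
          = PowerSeries.C (u i (m+3)) * (Vop 2 f) ^ i
            - PowerSeries.C (48 * u (i-1) (m+2) + 4096 * u (i-1-1) (m+2) + u (i-1) (m+1))
              * (Vop 2 f) ^ i := by
        intro i _
        rw [map_sub]; ring
      rw [Finset.sum_congr rfl hsplit, Finset.sum_sub_distrib, hfinal, sub_self]
    intro i
    by_cases hiN : i < 2*m+6+1
    · have hv := sum_s_eq_zero f cf_0 cf_1 _ (by norm_num [hz, hz']) _ hdiff i hiN
      linarith [hv]
    · push_neg at hiN
      rw [hu_zero i (m+3) (by omega), hu_zero (i-1) (m+2) (by omega),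
        hu_zero (i-1-1) (m+2) (by omega), hu_zero (i-1) (m+1) (by omega)]
      ring
  have master : ∀ A B : ℕ, u A B = 48 * u (A-1) (B-1) + 4096 * u (A-2) (B-1) + u (A-1) (B-2)
      + ((if A=1∧B=1 then (24:ℚ) else 0) + (if A=2∧B=1 then 2048 else 0)
        + (if A=1∧B=2 then 1 else 0)) := by
    intro A B
    by_cases hB3 : 3 ≤ B
    · obtain ⟨m, rfl⟩ : ∃ m, B = m + 3 := ⟨B - 3, by omega⟩
      rw [hrec m A, show A-1-1 = A-2 from by omega,
        show m+3-1 = m+2 from by omega, show m+3-2 = m+1 from by omega,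
        if_neg (by omega : ¬(A=1 ∧ m+3=1)), if_neg (by omega : ¬(A=2 ∧ m+3=1)),
        if_neg (by omega : ¬(A=1 ∧ m+3=2))]
      ring
    · push_neg at hB3
      interval_cases B
      · norm_num [hz']
      · by_cases hA : A ≤ 2
        · interval_cases A
          · norm_num [hz, hz']
          · norm_num [u11, hz']
          · norm_num [u21, hz']
        · push_neg at hA
          rw [hu_zero A 1 (by omega), if_neg (by omega : ¬(A=1 ∧ (1:ℕ)=1)),
            if_neg (by omega : ¬(A=2 ∧ (1:ℕ)=1)), if_neg (by omega : ¬(A=1 ∧ (1:ℕ)=2))]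
          norm_num [hz']
      · by_cases hA : A ≤ 4
        · interval_cases A
          · norm_num [hz, hz']
          · norm_num [u12, hz, hz']
          · norm_num [u22, u11, hz, hz']
          · norm_num [u32, u21, u11, hz, hz']
          · norm_num [u42, u21, hz, hz', hu_zero 3 1 (by omega)]
        · push_neg at hA
          rw [hu_zero A 2 (by omega), hu_zero (A-1) 1 (by omega), hu_zero (A-2) 1 (by omega),
            if_neg (by omega : ¬(A=1 ∧ (2:ℕ)=1)), if_neg (by omega : ¬(A=2 ∧ (2:ℕ)=1)),
            if_neg (by omega : ¬(A=1 ∧ (2:ℕ)=2))]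
          norm_num [hz']
  have scalar : ∀ A B : ℕ,
      2*u A B - u (A-1) (B-1) * 96 - u (A-2) (B-1) * 8192 - u (A-1) (B-2) * 2
        = (if A=1∧B=1 then (48:ℚ) else 0) + (if A=2∧B=1 then 4096 else 0)
          + (if A=1∧B=2 then 2 else 0) := by
    intro A B
    have hm := master A B
    split_ifs at hm ⊢ <;> linarith
  clear hu hu1 hu2 e11 e12 e21 e22 e23 e24 hsum h1n h2n hfg hrec hf hf1
  subst hX hY hI
  have hM1 : (MvPowerSeries.X 0 : MvPowerSeries (Fin 2) ℚ) * MvPowerSeries.X 1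
      = MvPowerSeries.monomial (Finsupp.single 0 1 + Finsupp.single 1 1) 1 := by
    rw [MvPowerSeries.X_def, MvPowerSeries.X_def, MvPowerSeries.monomial_mul_monomial, one_mul]
  have hM2 : (MvPowerSeries.X 0 : MvPowerSeries (Fin 2) ℚ)^2 * MvPowerSeries.X 1
      = MvPowerSeries.monomial (Finsupp.single 0 2 + Finsupp.single 1 1) 1 := by
    rw [MvPowerSeries.X_pow_eq, MvPowerSeries.X_def, MvPowerSeries.monomial_mul_monomial,
      one_mul]
  have hM3 : (MvPowerSeries.X 0 : MvPowerSeries (Fin 2) ℚ) * (MvPowerSeries.X 1)^2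
      = MvPowerSeries.monomial (Finsupp.single 0 1 + Finsupp.single 1 2) 1 := by
    rw [MvPowerSeries.X_pow_eq, MvPowerSeries.X_def, MvPowerSeries.monomial_mul_monomial,
      one_mul]
  have habs : ∀ (a : ℚ) (d : Fin 2 →₀ ℕ),
      (MvPowerSeries.C) a * MvPowerSeries.monomial d 1
        = MvPowerSeries.monomial d a := by
    intro a d
    apply MvPowerSeries.ext
    intro e
    rw [MvPowerSeries.coeff_C_mul, MvPowerSeries.coeff_monomial, MvPowerSeries.coeff_monomial]
    split_ifs <;> simp
  have e96 : (96 : MvPowerSeries (Fin 2) ℚ) * (MvPowerSeries.X 0 * MvPowerSeries.X 1)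
      = MvPowerSeries.monomial (Finsupp.single 0 1 + Finsupp.single 1 1) (96:ℚ) := by
    rw [hM1, show (96 : MvPowerSeries (Fin 2) ℚ) = MvPowerSeries.C 96 from
      (map_ofNat _ _).symm, habs]
  have e8192 : (8192 : MvPowerSeries (Fin 2) ℚ)
        * ((MvPowerSeries.X 0)^2 * MvPowerSeries.X 1)
      = MvPowerSeries.monomial (Finsupp.single 0 2 + Finsupp.single 1 1) (8192:ℚ) := by
    rw [hM2, show (8192 : MvPowerSeries (Fin 2) ℚ) = MvPowerSeries.C 8192 from
      (map_ofNat _ _).symm, habs]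
  have e2m : (2 : MvPowerSeries (Fin 2) ℚ) * (MvPowerSeries.X 0 * (MvPowerSeries.X 1)^2)
      = MvPowerSeries.monomial (Finsupp.single 0 1 + Finsupp.single 1 2) (2:ℚ) := by
    rw [hM3, show (2 : MvPowerSeries (Fin 2) ℚ) = MvPowerSeries.C 2 from
      (map_ofNat _ _).symm, habs]
  have e48 : (48 : MvPowerSeries (Fin 2) ℚ) * (MvPowerSeries.X 0 * MvPowerSeries.X 1)
      = MvPowerSeries.monomial (Finsupp.single 0 1 + Finsupp.single 1 1) (48:ℚ) := by
    rw [hM1, show (48 : MvPowerSeries (Fin 2) ℚ) = MvPowerSeries.C 48 from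
      (map_ofNat _ _).symm, habs]
  have e4096 : (4096 : MvPowerSeries (Fin 2) ℚ)
        * ((MvPowerSeries.X 0)^2 * MvPowerSeries.X 1)
      = MvPowerSeries.monomial (Finsupp.single 0 2 + Finsupp.single 1 1) (4096:ℚ) := by
    rw [hM2, show (4096 : MvPowerSeries (Fin 2) ℚ) = MvPowerSeries.C 4096 from
      (map_ofNat _ _).symm, habs]
  have eC2 : MvPowerSeries.C 2 = (2 : MvPowerSeries (Fin 2) ℚ) := map_ofNat _ _
  suffices h : MvPowerSeries.C 2 * F
      - F * MvPowerSeries.monomial (Finsupp.single 0 1 + Finsupp.single 1 1) (96:ℚ)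
      - F * MvPowerSeries.monomial (Finsupp.single 0 2 + Finsupp.single 1 1) (8192:ℚ)
      - F * MvPowerSeries.monomial (Finsupp.single 0 1 + Finsupp.single 1 2) (2:ℚ)
      = MvPowerSeries.monomial (Finsupp.single 0 1 + Finsupp.single 1 1) (48:ℚ)
        + MvPowerSeries.monomial (Finsupp.single 0 2 + Finsupp.single 1 1) (4096:ℚ)
        + MvPowerSeries.monomial (Finsupp.single 0 1 + Finsupp.single 1 2) (2:ℚ) by
    linear_combination h - F * eC2 - F * e96 - F * e8192 - F * e2m - e48 - e4096 - e2m
  apply MvPowerSeries.ext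
  intro e
  have hsub1a : (e - (Finsupp.single 0 1 + Finsupp.single 1 1) : Fin 2 →₀ ℕ) 0 = e 0 - 1 := by
    rw [Finsupp.tsub_apply]; simp
  have hsub1b : (e - (Finsupp.single 0 1 + Finsupp.single 1 1) : Fin 2 →₀ ℕ) 1 = e 1 - 1 := by
    rw [Finsupp.tsub_apply]; simp
  have hsub2a : (e - (Finsupp.single 0 2 + Finsupp.single 1 1) : Fin 2 →₀ ℕ) 0 = e 0 - 2 := by
    rw [Finsupp.tsub_apply]; simp
  have hsub2b : (e - (Finsupp.single 0 2 + Finsupp.single 1 1) : Fin 2 →₀ ℕ) 1 = e 1 - 1 := by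
    rw [Finsupp.tsub_apply]; simp
  have hsub3a : (e - (Finsupp.single 0 1 + Finsupp.single 1 2) : Fin 2 →₀ ℕ) 0 = e 0 - 1 := by
    rw [Finsupp.tsub_apply]; simp
  have hsub3b : (e - (Finsupp.single 0 1 + Finsupp.single 1 2) : Fin 2 →₀ ℕ) 1 = e 1 - 2 := by
    rw [Finsupp.tsub_apply]; simp
  have hle1 : ((Finsupp.single 0 1 + Finsupp.single 1 1 : Fin 2 →₀ ℕ) ≤ e)
      ↔ (1 ≤ e 0 ∧ 1 ≤ e 1) := by
    rw [Finsupp.le_def, Fin.forall_fin_two]; simp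
  have hle2 : ((Finsupp.single 0 2 + Finsupp.single 1 1 : Fin 2 →₀ ℕ) ≤ e)
      ↔ (2 ≤ e 0 ∧ 1 ≤ e 1) := by
    rw [Finsupp.le_def, Fin.forall_fin_two]; simp
  have hle3 : ((Finsupp.single 0 1 + Finsupp.single 1 2 : Fin 2 →₀ ℕ) ≤ e)
      ↔ (1 ≤ e 0 ∧ 2 ≤ e 1) := by
    rw [Finsupp.le_def, Fin.forall_fin_two]; simp
  have heq1 : (e = (Finsupp.single 0 1 + Finsupp.single 1 1 : Fin 2 →₀ ℕ))
      ↔ (e 0 = 1 ∧ e 1 = 1) := by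
    rw [DFunLike.ext_iff, Fin.forall_fin_two]; simp
  have heq2 : (e = (Finsupp.single 0 2 + Finsupp.single 1 1 : Fin 2 →₀ ℕ))
      ↔ (e 0 = 2 ∧ e 1 = 1) := by
    rw [DFunLike.ext_iff, Fin.forall_fin_two]; simp
  have heq3 : (e = (Finsupp.single 0 1 + Finsupp.single 1 2 : Fin 2 →₀ ℕ))
      ↔ (e 0 = 1 ∧ e 1 = 2) := by
    rw [DFunLike.ext_iff, Fin.forall_fin_two]; simp
  rw [map_sub, map_sub, map_sub, map_add, map_add,
    MvPowerSeries.coeff_C_mul,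
    MvPowerSeries.coeff_mul_monomial, MvPowerSeries.coeff_mul_monomial,
    MvPowerSeries.coeff_mul_monomial,
    MvPowerSeries.coeff_monomial, MvPowerSeries.coeff_monomial,
    MvPowerSeries.coeff_monomial,
    hF e, hF (e - (Finsupp.single 0 1 + Finsupp.single 1 1)),
    hF (e - (Finsupp.single 0 2 + Finsupp.single 1 1)),
    hF (e - (Finsupp.single 0 1 + Finsupp.single 1 2)),
    hsub1a, hsub1b, hsub2a, hsub2b, hsub3a, hsub3b]
  simp only [hle1, hle2, hle3, heq1, heq2, heq3]
  have hg : ∀ x y : ℕ, (if 1 ≤ x ∧ 1 ≤ y then u x y else 0) = u x y := by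
    intro x y
    split_ifs with h'
    · rfl
    · exact (hu_zero x y (by omega)).symm
  rw [hg, hg, hg, hg]
  have w1 : (if 1 ≤ e 0 ∧ 1 ≤ e 1 then u (e 0 - 1) (e 1 - 1) * 96 else 0)
      = u (e 0 - 1) (e 1 - 1) * 96 := by
    split_ifs with h'
    · rfl
    · rw [hu_zero _ _ (by omega)]; ring
  have w2 : (if 2 ≤ e 0 ∧ 1 ≤ e 1 then u (e 0 - 2) (e 1 - 1) * 8192 else 0)
      = u (e 0 - 2) (e 1 - 1) * 8192 := by
    split_ifs with h'
    · rfl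
    · rw [hu_zero _ _ (by omega)]; ring
  have w3 : (if 1 ≤ e 0 ∧ 2 ≤ e 1 then u (e 0 - 1) (e 1 - 2) * 2 else 0)
      = u (e 0 - 1) (e 1 - 2) * 2 := by
    split_ifs with h'
    · rfl
    · rw [hu_zero _ _ (by omega)]; ring
  rw [w1, w2, w3]
  exact scalar (e 0) (e 1)
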